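/- arXiv:1006.2450 — 7 statements merged into one kernel-verified Lean document; each statement's English description precedes it below -/
import Mathlib

section
/- The number u(n) of partitions λ of n such that O(λ) is not congruent to O(λ') modulo 4 is even, for every n ≥ 0. -/
/-- The number of odd parts (odd row lengths) of the partition given by a Young diagram. -/
def oddParts (mu : YoungDiagram) : Nat :=
  ((Finset.range mu.card).filter (fun i => Odd (mu.rowLen i))).card

lemma even_nat_card_of_involutive {α : Type*} (f : α → α)
    (hf : Function.Involutive f) (hff : ∀ x, f x ≠ x) : Even (Nat.card α) := by
  by_cases h : Finite α
  · have := Fintype.ofFinite α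
    rw [Nat.card_eq_fintype_card]
    have key : (∑ _x : α, (1 : ZMod 2)) = 0 := by
      classical
      refine Finset.sum_ninvolution f (fun a => ?_) (fun a _ => hff a)
        (fun a => Finset.mem_univ _) hf
      decide
    rw [Finset.sum_const, Finset.card_univ, nsmul_eq_mul, mul_one] at key
    have := (ZMod.natCast_eq_zero_iff _ 2).mp key
    exact even_iff_two_dvd.mpr this
  · have := not_finite_iff_infinite.mp h
    rw [Nat.card_eq_zero_of_infinite]
    exact Even.zero

lemma card_transpose (μ : YoungDiagram) : μ.transpose.card = μ.card := by
  simp [YoungDiagram.transpose, YoungDiagram.card]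

theorem stmt3 (n : ℕ) :
    Even (Nat.card {μ : YoungDiagram //
      μ.card = n ∧ ¬ (oddParts μ ≡ oddParts μ.transpose [MOD 4])}) := by
  refine even_nat_card_of_involutive
    (fun x => ⟨x.1.transpose, ?_, ?_⟩) (fun x => ?_) (fun x => ?_)
  · rw [card_transpose]; exact x.2.1
  · rw [YoungDiagram.transpose_transpose]
    intro h
    exact x.2.2 h.symm
  · ext1
    exact YoungDiagram.transpose_transpose _
  · intro h
    have h1 : x.1.transpose = x.1 := congrArg Subtype.val h
    exact x.2.2 (by rw [h1])
end

section
/- As formal power series, (q^4;q^4)_∞ · (q^2;q^4)_∞^2 = ∑_{n=-∞}^{∞} (-1)^n q^{2n^2}. -/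
/-!
Write `[n, j]_p` for the Gaussian binomial coefficient and `(p;p)_n = ∏_{i<n} (1 - p^(i+1))`.
The q-binomial theorem `∏_{i<n} (a + b p^i) = ∑_j [n, j]_p p^(j choose 2) a^(n-j) b^j` at
`p = q², a = q^(2N), b = -q` gives, after pairing the factors `i` and `2N-1-i` and cancelling
`(-1)^N q^(3N²)`, Gauss's finite identity
`∏_{i<N} (1 - q^(2i+1))² = ∑_{|k| ≤ N} (-1)^k [2N, N+k]_{q²} q^(k²)`.
Take `q = X²`, `p = X⁴` and `N = m + 1`. From `[n, j]_p (p;p)_j (p;p)_(n-j) = (p;p)_n`, and since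
the unit `(p;p)_c` has the same class modulo `X^(4(b+1))` for all `c ≥ b`, we get
`(p;p)_N [2N, N+k]_p ≡ 1` modulo `X^(4(N-|k|+1))`. As `m - 2k² < 4(N-|k|+1)`, the `m`-th
coefficient of the `k`-th term is that of `(-1)^k X^(2k²)`.
-/

open PowerSeries Finset

variable {R : Type*} [CommRing R]

def qBinom (q : R) : ℕ → ℕ → R
  | _, 0 => 1
  | 0, _ + 1 => 0
  | n + 1, k + 1 => qBinom q n k + q ^ (k + 1) * qBinom q n (k + 1)

def qPoch (q : R) (n : ℕ) : R := ∏ i ∈ range n, (1 - q ^ (i + 1))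

lemma qPoch_succ (q : R) (n : ℕ) : qPoch q (n + 1) = qPoch q n * (1 - q ^ (n + 1)) :=
  prod_range_succ _ _

namespace qBinom

variable (q : R)

@[simp] lemma zero_right (n : ℕ) : qBinom q n 0 = 1 := by cases n <;> rfl

lemma succ_succ (n k : ℕ) :
    qBinom q (n + 1) (k + 1) = qBinom q n k + q ^ (k + 1) * qBinom q n (k + 1) := rfl

lemma eq_zero_of_lt {n k : ℕ} (h : n < k) : qBinom q n k = 0 := by
  induction n generalizing k with
  | zero => obtain ⟨k, rfl⟩ := Nat.exists_eq_add_one_of_ne_zero h.ne'; rfl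
  | succ n ih =>
    obtain ⟨k, rfl⟩ := Nat.exists_eq_add_one_of_ne_zero (by omega : k ≠ 0)
    rw [succ_succ, ih (by omega), ih (by omega), mul_zero, add_zero]

@[simp] lemma self (n : ℕ) : qBinom q n n = 1 := by
  induction n with
  | zero => rfl
  | succ n ih => rw [succ_succ, ih, eq_zero_of_lt q n.lt_succ_self, mul_zero, add_zero]

lemma mul_qPoch_mul_qPoch {n k : ℕ} (h : k ≤ n) :
    qBinom q n k * qPoch q k * qPoch q (n - k) = qPoch q n := by
  induction n generalizing k with
  | zero => obtain rfl := Nat.le_zero.1 h; simp [qPoch]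
  | succ n ih =>
    rcases k with _ | k
    · simp [qPoch]
    rcases (Nat.lt_succ_iff.1 h).eq_or_lt with rfl | hk
    · simp [qPoch]
    have h₁ := ih (k := k) (by omega)
    have h₂ := ih hk
    obtain ⟨l, hl⟩ : ∃ l, n - k = l + 1 := ⟨n - k - 1, by omega⟩
    rw [hl, qPoch_succ] at h₁
    rw [show n - (k + 1) = l by omega, qPoch_succ] at h₂
    have hpow : q ^ (k + 1) * q ^ (l + 1) = q ^ (n + 1) := by rw [← pow_add]; congr 1; omega
    rw [succ_succ, show n + 1 - (k + 1) = l + 1 by omega, qPoch_succ, qPoch_succ, qPoch_succ]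
    linear_combination
      (1 - q ^ (k + 1)) * h₁ + q ^ (k + 1) * (1 - q ^ (l + 1)) * h₂ - qPoch q n * hpow

end qBinom

theorem prod_add_mul_pow_eq_sum_qBinom (p a b : R) (n : ℕ) :
    ∏ i ∈ range n, (a + b * p ^ i) =
      ∑ j ∈ range (n + 1), qBinom p n j * p ^ j.choose 2 * a ^ (n - j) * b ^ j := by
  induction n generalizing b with
  | zero => simp
  | succ n ih =>
    have hb : ∀ i, b * p ^ (i + 1) = b * p * p ^ i := fun i => by ring
    set S :=
      ∑ j ∈ range (n + 1), qBinom p n j * p ^ j.choose 2 * a ^ (n - j) * (b * p) ^ j with hS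
    have hbS : b * S = ∑ j ∈ range (n + 1),
        qBinom p n j * p ^ (j + 1).choose 2 * a ^ (n - j) * b ^ (j + 1) := by
      rw [mul_sum]
      refine sum_congr rfl fun j _ => ?_
      rw [Nat.choose_succ_succ', Nat.choose_one_right]
      ring
    have haS : a * S = ∑ j ∈ range (n + 1),
        p ^ (j + 1) * qBinom p n (j + 1) * p ^ (j + 1).choose 2 * a ^ (n - j) * b ^ (j + 1) +
          a ^ (n + 1) := by
      conv_lhs => rw [hS, sum_range_succ']
      conv_rhs => rw [sum_range_succ, qBinom.eq_zero_of_lt p n.lt_succ_self]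
      rw [mul_add, mul_sum]
      simp only [qBinom.zero_right, Nat.choose_zero_succ, pow_zero, mul_one, Nat.sub_zero,
        mul_zero, zero_mul, add_zero]
      congr 1
      · refine sum_congr rfl fun j hj => ?_
        rw [show n - j = n - (j + 1) + 1 by have := mem_range.1 hj; omega]
        ring
      · ring
    rw [prod_range_succ', funext fun i => congrArg (a + ·) (hb i), ih]
    conv_rhs => rw [sum_range_succ']
    simp only [qBinom.succ_succ, add_mul, sum_add_distrib, Nat.add_sub_add_right, Nat.sub_zero,
      qBinom.zero_right, Nat.choose_zero_succ, pow_zero]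
    linear_combination hbS + haS

lemma two_mul_choose_two_add_self (j : ℕ) : 2 * j.choose 2 + j = j ^ 2 := by
  induction j with
  | zero => rfl
  | succ j ih => rw [Nat.choose_succ_succ', Nat.choose_one_right]; nlinarith

lemma prod_range_pow_two_mul_add_one (q : R) (N : ℕ) :
    ∏ i ∈ range N, q ^ (2 * i + 1) = q ^ N ^ 2 := by
  induction N with
  | zero => simp
  | succ N ih => rw [prod_range_succ, ih, ← pow_add]; ring_nf

lemma prod_range_two_mul_pow_sub_pow (q : R) (N : ℕ) :
    ∏ i ∈ range (2 * N), (q ^ (2 * N) - q ^ (2 * i + 1)) =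
      (-1) ^ N * q ^ (3 * N ^ 2) * ∏ i ∈ range N, (1 - q ^ (2 * i + 1)) ^ 2 := by
  have hlow : ∏ i ∈ range N, (q ^ (2 * N) - q ^ (2 * i + 1)) =
      (-1) ^ N * q ^ N ^ 2 * ∏ i ∈ range N, (1 - q ^ (2 * i + 1)) := calc
    _ = ∏ i ∈ range N, (q ^ (2 * N) - q ^ (2 * (N - 1 - i) + 1)) := (prod_range_reflect _ N).symm
    _ = ∏ i ∈ range N, (-1 * q ^ (2 * (N - 1 - i) + 1) * (1 - q ^ (2 * i + 1))) := by
      refine prod_congr rfl fun i hi => ?_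
      rw [show 2 * N = 2 * (N - 1 - i) + 1 + (2 * i + 1) by have := mem_range.1 hi; omega, pow_add]
      ring
    _ = _ := by
      rw [prod_mul_distrib, prod_mul_distrib, prod_const, card_range,
        prod_range_reflect (fun i => q ^ (2 * i + 1)), prod_range_pow_two_mul_add_one]
  have hhigh : ∏ i ∈ range N, (q ^ (2 * N) - q ^ (2 * (N + i) + 1)) =
      q ^ (2 * N * N) * ∏ i ∈ range N, (1 - q ^ (2 * i + 1)) := calc
    _ = ∏ i ∈ range N, (q ^ (2 * N) * (1 - q ^ (2 * i + 1))) :=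
      prod_congr rfl fun i _ => by ring
    _ = _ := by rw [prod_mul_distrib, prod_const, card_range, ← pow_mul]
  rw [show range (2 * N) = range (N + N) by rw [two_mul], prod_range_add, hlow, hhigh, prod_pow]
  ring

theorem prod_one_sub_pow_odd_sq_eq_sum {q : R} (hq : IsLeftRegular q) (N : ℕ) :
    ∏ i ∈ range N, (1 - q ^ (2 * i + 1)) ^ 2 =
      ∑ k ∈ Icc (-(N : ℤ)) N,
        (-1) ^ k.natAbs * qBinom (q ^ 2) (2 * N) (N + k).toNat * q ^ k.natAbs ^ 2 := by
  have hreg : IsLeftRegular ((-1 : R) ^ N * q ^ (3 * N ^ 2)) :=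
    (isUnit_neg_one.pow N).isRegular.left.mul (hq.pow _)
  refine hreg ?_
  dsimp only
  rw [← prod_range_two_mul_pow_sub_pow]
  have hfac : ∀ i, q ^ (2 * N) - q ^ (2 * i + 1) = q ^ (2 * N) + -q * (q ^ 2) ^ i := fun i => by
    ring
  rw [prod_congr rfl fun i _ => hfac i, prod_add_mul_pow_eq_sum_qBinom, mul_sum]
  refine sum_nbij' (fun j => (j : ℤ) - N) (fun k => (N + k).toNat) ?_ ?_ ?_ ?_ ?_
  · intro j hj; simp only [mem_range, mem_Icc] at hj ⊢; omega
  · intro k hk; simp only [mem_range, mem_Icc] at hk ⊢; omega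
  · intro j _; simp
  · intro k hk; simp only [mem_Icc] at hk; omega
  intro j hj
  have hj : j ≤ 2 * N := Nat.lt_succ_iff.1 (mem_range.1 hj)
  have hexp : 2 * j.choose 2 + 2 * N * (2 * N - j) + j = 3 * N ^ 2 + ((j : ℤ) - N).natAbs ^ 2 := by
    have h := two_mul_choose_two_add_self j
    zify [hj] at h ⊢
    rw [sq_abs]
    linear_combination h
  have hsign : (-1 : R) ^ j = (-1) ^ N * (-1) ^ ((j : ℤ) - N).natAbs := by
    rw [← pow_add]
    exact neg_one_pow_congr (by simp only [Nat.even_iff]; omega)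
  rw [show ((N : ℤ) + ((j : ℤ) - N)).toNat = j by omega, neg_pow, hsign, ← pow_mul, ← pow_mul]
  calc _ = (-1) ^ N * (-1) ^ ((j : ℤ) - N).natAbs * qBinom (q ^ 2) (2 * N) j *
        q ^ (2 * j.choose 2 + 2 * N * (2 * N - j) + j) := by ring
    _ = _ := by rw [hexp]; ring

lemma mk_qPoch_X_pow_eq {r a b e : ℕ} (hab : b ≤ a) (he : e ≤ r * (b + 1)) :
    Ideal.Quotient.mk (Ideal.span {(X : R⟦X⟧) ^ e}) (qPoch (X ^ r) a) =
      Ideal.Quotient.mk (Ideal.span {(X : R⟦X⟧) ^ e}) (qPoch (X ^ r) b) := by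
  have hIco : Ideal.Quotient.mk (Ideal.span {(X : R⟦X⟧) ^ e})
      (∏ i ∈ Ico b a, (1 - (X ^ r) ^ (i + 1))) = 1 := by
    refine (map_prod _ _ _).trans (prod_eq_one fun i hi => ?_)
    rw [map_sub, map_one, sub_eq_self, Ideal.Quotient.eq_zero_iff_mem, Ideal.mem_span_singleton,
      ← pow_mul]
    exact pow_dvd_pow X (he.trans (Nat.mul_le_mul_left r (by simpa using (mem_Ico.1 hi).1)))
  rw [qPoch, qPoch, ← prod_range_mul_prod_Ico _ hab, map_mul, hIco, mul_one]

lemma isUnit_qPoch_X_pow {r : ℕ} (hr : r ≠ 0) (n : ℕ) : IsUnit (qPoch (X ^ r : R⟦X⟧) n) := by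
  simp [isUnit_iff_constantCoeff, qPoch, hr]

lemma X_pow_dvd_qPoch_mul_qBinom_sub_one {r a n j b : ℕ} (hr : r ≠ 0) (ha : b ≤ a) (hj : b ≤ j)
    (hnj : b + j ≤ n) :
    (X : R⟦X⟧) ^ (r * (b + 1)) ∣ qPoch (X ^ r) a * qBinom (X ^ r) n j - 1 := by
  set π := Ideal.Quotient.mk (Ideal.span {(X : R⟦X⟧) ^ (r * (b + 1))})
  have hP : ∀ c, b ≤ c → π (qPoch (X ^ r) c) = π (qPoch (X ^ r) b) :=
    fun c hc => mk_qPoch_X_pow_eq hc le_rfl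
  have hu : IsUnit (π (qPoch (X ^ r) b)) := (isUnit_qPoch_X_pow hr b).map π
  have h := congrArg π (qBinom.mul_qPoch_mul_qPoch (X ^ r : R⟦X⟧) (show j ≤ n by omega))
  rw [map_mul, map_mul, hP j hj, hP (n - j) (by omega), hP n (by omega)] at h
  rw [← Ideal.mem_span_singleton, ← Ideal.Quotient.eq_zero_iff_mem, map_sub, map_one, sub_eq_zero,
    map_mul, hP a ha, mul_comm (π _)]
  exact hu.mul_right_cancel (h.trans (one_mul _).symm)

lemma coeff_qPoch_mul_qBinom_X_pow {r a n j b d : ℕ} (hr : r ≠ 0) (ha : b ≤ a) (hj : b ≤ j)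
    (hnj : b + j ≤ n) (hd : d < r * (b + 1)) :
    coeff d (qPoch (X ^ r : R⟦X⟧) a * qBinom (X ^ r) n j) = coeff d 1 := by
  have h := X_pow_dvd_iff.1 (X_pow_dvd_qPoch_mul_qBinom_sub_one (R := R) hr ha hj hnj) d hd
  rwa [map_sub, sub_eq_zero] at h

lemma coeff_qPoch_mul_qBinom_mul_X_pow (m : ℕ) {k : ℤ} (hk : k.natAbs ≤ m + 1) :
    coeff m (qPoch (X ^ 4 : R⟦X⟧) (m + 1) *
      qBinom (X ^ 4) (2 * (m + 1)) (((m + 1 : ℕ) : ℤ) + k).toNat * X ^ (2 * k.natAbs ^ 2)) =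
    coeff m (X ^ (2 * k.natAbs ^ 2) : R⟦X⟧) := by
  rw [coeff_mul_X_pow', coeff_X_pow]
  by_cases h : 2 * k.natAbs ^ 2 ≤ m
  · have hsq := Nat.le_self_pow two_ne_zero k.natAbs
    rw [if_pos h, coeff_qPoch_mul_qBinom_X_pow (b := m + 1 - k.natAbs) four_ne_zero (by omega)
      (by omega) (by omega) (by omega), coeff_one]
    exact if_congr (by omega) rfl rfl
  · rw [if_neg h, if_neg (by omega)]

/-- `(q^4;q^4)_∞ (q^2;q^4)_∞^2 = ∑_{n∈ℤ} (-1)^n q^{2n^2}`, stated coefficientwise: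
the `m`-th coefficient of each side is already attained by the partial
products/sums shown. -/
theorem stmt7 (m : ℕ) :
    PowerSeries.coeff (R := ℤ) m
      ((∏ k ∈ Finset.range (m + 1), (1 - (X : ℤ⟦X⟧) ^ (4 * (k + 1)))) *
        (∏ k ∈ Finset.range (m + 1), (1 - (X : ℤ⟦X⟧) ^ (4 * k + 2))) ^ 2) =
    PowerSeries.coeff (R := ℤ) m
      (∑ n ∈ Finset.Icc (-(m : ℤ)) (m : ℤ),
        (-1 : ℤ⟦X⟧) ^ n.natAbs * (X : ℤ⟦X⟧) ^ (2 * n.natAbs ^ 2)) := by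
  have hX : IsLeftRegular (X ^ 2 : ℤ⟦X⟧) := (IsRegular.of_ne_zero (pow_ne_zero 2 X_ne_zero)).left
  have hsign : ∀ (n : ℕ) (f : ℤ⟦X⟧), (-1 : ℤ⟦X⟧) ^ n * f = C ((-1) ^ n) * f := by simp
  have hodd : ∀ k : ℕ, (X : ℤ⟦X⟧) ^ (4 * k + 2) = (X ^ 2) ^ (2 * k + 1) := fun k => by
    rw [← pow_mul]; ring_nf
  rw [show ∏ k ∈ range (m + 1), (1 - (X : ℤ⟦X⟧) ^ (4 * (k + 1))) = qPoch (X ^ 4) (m + 1) by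
      simp only [qPoch, pow_mul],
    ← prod_pow, prod_congr rfl fun k _ => by rw [hodd], prod_one_sub_pow_odd_sq_eq_sum hX,
    mul_sum, map_sum, map_sum]
  rw [sum_subset (Icc_subset_Icc (show -((m + 1 : ℕ) : ℤ) ≤ -m by omega)
    (show (m : ℤ) ≤ (m + 1 : ℕ) by omega))]
  · refine sum_congr rfl fun k hk => ?_
    rw [show ((X : ℤ⟦X⟧) ^ 2) ^ 2 = X ^ 4 by ring, ← pow_mul,
      show ∀ P s G Y : ℤ⟦X⟧, P * (s * G * Y) = s * (P * G * Y) from fun _ _ _ _ => by ring,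
      hsign, hsign, coeff_C_mul, coeff_C_mul,
      coeff_qPoch_mul_qBinom_mul_X_pow m (by simp only [mem_Icc] at hk; omega)]
  · intro k hk hk'
    simp only [mem_Icc] at hk hk'
    have hsq := Nat.le_self_pow two_ne_zero k.natAbs
    rw [hsign, coeff_C_mul, coeff_X_pow, if_neg (by omega), mul_zero]
end

section
/- As formal power series, (q;q)_∞ (-1;q)_∞ (-q;q)_∞ = ∑_{n∈ℤ} q^{n(n+1)/2}. -/
/-!
Finite Jacobi triple product: with `T t = t(t+1)/2` and Gaussian binomials `[n, k]` in `q`,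
`∏_{j<N} (z + q^j)(1 + z q^{j+1}) = ∑_{k ≤ 2N} [2N, k] q^{T(k-N)} z^k`,
by induction on `N`, comparing coefficients of `z^k` through the double `q`-Pascal rule for
`[2N+2, k]`. Put `z = 1` and multiply by `(q;q)_N`. For `k ≤ N`,
`(q;q)_N [2N, k] = ∏_{k<i≤N} (1 - q^i) · ∏_{2N-k<i≤2N} (1 - q^i) ≡ 1 mod q^{k+1}`, and
symmetrically for `k ≥ N`; since `T t ≥ |t| - 1`, every summand is then `q^{T(k-N)}` modulo
`q^N`. So `(q;q)_N (-1;q)_N (-q;q)_N ≡ ∑_{-N ≤ t < N} q^{T t} mod q^N`, and `N = m + 1` gives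
the coefficient of `q^m`.
-/

open PowerSeries

namespace JacobiTripleProduct

open Finset

def triangle (t : ℤ) : ℕ := (t * (t + 1) / 2).toNat

lemma two_mul_triangle (t : ℤ) : 2 * (triangle t : ℤ) = t * (t + 1) := by
  have h2 : 2 ∣ t * (t + 1) := (Int.even_mul_succ_self t).two_dvd
  have hnn : 0 ≤ t * (t + 1) := by nlinarith [sq_nonneg (2 * t + 1)]
  unfold triangle
  omega

lemma triangle_of_eq_add_one {s t : ℤ} (h : s = t + 1) : (triangle s : ℤ) = triangle t + s := by
  subst h
  linarith [two_mul_triangle t, two_mul_triangle (t + 1)]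

lemma abs_le_triangle_add_one (t : ℤ) : |t| ≤ triangle t + 1 := by
  have := two_mul_triangle t
  rcases abs_cases t with ⟨h, _⟩ | ⟨h, _⟩ <;> rw [h] <;> nlinarith

variable {R : Type*} [CommRing R]

lemma dvd_mul_sub_one {a x y : R} (hx : a ∣ x - 1) (hy : a ∣ y - 1) : a ∣ x * y - 1 := by
  rw [show x * y - 1 = x * (y - 1) + (x - 1) by ring]
  exact dvd_add (dvd_mul_of_dvd_right hy x) hx

lemma dvd_prod_sub_one {ι : Type*} {a : R} (s : Finset ι) (f : ι → R)
    (h : ∀ i ∈ s, a ∣ f i - 1) : a ∣ ∏ i ∈ s, f i - 1 :=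
  Finset.prod_induction f (fun x => a ∣ x - 1) (fun _ _ => dvd_mul_sub_one) (by simp) h

noncomputable def qPochhammer (n : ℕ) : R⟦X⟧ := ∏ i ∈ range n, (1 - X ^ (i + 1))

lemma qPochhammer_zero : qPochhammer 0 = (1 : R⟦X⟧) := prod_range_zero _

lemma qPochhammer_succ (n : ℕ) :
    qPochhammer (n + 1) = qPochhammer n * (1 - (X : R⟦X⟧) ^ (n + 1)) :=
  prod_range_succ _ _

lemma qPochhammer_add (a b : ℕ) :
    qPochhammer (a + b) = qPochhammer a * ∏ i ∈ range b, (1 - (X : R⟦X⟧) ^ (a + i + 1)) :=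
  prod_range_add _ _ _

lemma isUnit_qPochhammer (n : ℕ) : IsUnit (qPochhammer n : R⟦X⟧) := by
  refine isUnit_iff_constantCoeff.mpr ?_
  simp [qPochhammer, map_prod]

lemma X_pow_dvd_prod_one_sub_sub_one (a b : ℕ) :
    (X : R⟦X⟧) ^ (a + 1) ∣ ∏ i ∈ range b, (1 - (X : R⟦X⟧) ^ (a + i + 1)) - 1 :=
  dvd_prod_sub_one _ _ fun i _ => by
    rw [sub_sub_cancel_left, dvd_neg]
    exact pow_dvd_pow _ (by omega)

noncomputable def qBinomial : ℕ → ℕ → R⟦X⟧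
  | _, 0 => 1
  | 0, _ + 1 => 0
  | n + 1, k + 1 => qBinomial n k + X ^ (k + 1) * qBinomial n (k + 1)

@[simp]
lemma qBinomial_zero_right (n : ℕ) : qBinomial n 0 = (1 : R⟦X⟧) := by
  cases n <;> rfl

@[simp]
lemma qBinomial_zero_succ (k : ℕ) : qBinomial 0 (k + 1) = (0 : R⟦X⟧) := rfl

lemma qBinomial_succ_succ (n k : ℕ) :
    qBinomial (n + 1) (k + 1) = qBinomial n k + (X : R⟦X⟧) ^ (k + 1) * qBinomial n (k + 1) :=
  rfl

lemma qBinomial_eq_zero_of_lt {n k : ℕ} (h : n < k) : qBinomial n k = (0 : R⟦X⟧) := by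
  induction n generalizing k with
  | zero => obtain ⟨k, rfl⟩ := Nat.exists_eq_succ_of_ne_zero h.ne'; rfl
  | succ n ih =>
    obtain ⟨k, rfl⟩ := Nat.exists_eq_succ_of_ne_zero (by omega : k ≠ 0)
    rw [qBinomial_succ_succ, ih (by omega), ih (by omega), mul_zero, add_zero]

@[simp]
lemma qBinomial_self (n : ℕ) : qBinomial n n = (1 : R⟦X⟧) := by
  induction n with
  | zero => rfl
  | succ n ih => rw [qBinomial_succ_succ, ih, qBinomial_eq_zero_of_lt n.lt_succ_self]; ring

lemma qBinomial_mul_qPochhammer (k j : ℕ) :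
    qBinomial (k + j) k * (qPochhammer k * qPochhammer j) = (qPochhammer (k + j) : R⟦X⟧) := by
  induction j generalizing k with
  | zero => simp [qPochhammer_zero]
  | succ j ihj =>
    induction k with
    | zero => simp [qPochhammer_zero]
    | succ k ihk =>
      have hB := ihj (k + 1)
      rw [show k + 1 + j = k + (j + 1) by omega] at hB
      rw [show k + 1 + (j + 1) = k + (j + 1) + 1 by omega, qBinomial_succ_succ,
        qPochhammer_succ (k + (j + 1)), qPochhammer_succ k, qPochhammer_succ j]
      rw [qPochhammer_succ k] at hB
      rw [qPochhammer_succ j] at ihk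
      linear_combination (1 - X ^ (k + 1)) * ihk
        + X ^ (k + 1) * (1 - X ^ (j + 1)) * hB

lemma qBinomial_add_comm (k j : ℕ) : qBinomial (k + j) k = (qBinomial (k + j) j : R⟦X⟧) := by
  refine ((isUnit_qPochhammer k).mul (isUnit_qPochhammer j)).mul_right_cancel ?_
  rw [qBinomial_mul_qPochhammer, mul_comm (qPochhammer k), add_comm k j, qBinomial_mul_qPochhammer]

lemma qBinomial_succ_succ' (n k : ℕ) :
    qBinomial (n + 1) (k + 1) = (X : R⟦X⟧) ^ (n - k) * qBinomial n k + qBinomial n (k + 1) := by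
  rcases lt_or_ge n k with h | h
  · rw [qBinomial_eq_zero_of_lt h, qBinomial_eq_zero_of_lt (by omega : n < k + 1),
      qBinomial_eq_zero_of_lt (by omega : n + 1 < k + 1)]
    ring
  obtain ⟨j, rfl⟩ := Nat.exists_eq_add_of_le h
  cases j with
  | zero => simp [qBinomial_eq_zero_of_lt (Nat.lt_succ_self k)]
  | succ j =>
    have hk := qBinomial_mul_qPochhammer (R := R) k (j + 1)
    have hk₁ := qBinomial_mul_qPochhammer (R := R) (k + 1) j
    have hn := qBinomial_mul_qPochhammer (R := R) (k + 1) (j + 1)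
    rw [show k + 1 + j = k + (j + 1) by omega] at hk₁
    rw [show k + 1 + (j + 1) = k + (j + 1) + 1 by omega, qPochhammer_succ (k + (j + 1))] at hn
    rw [Nat.add_sub_cancel_left]
    refine ((isUnit_qPochhammer (k + 1)).mul (isUnit_qPochhammer (j + 1))).mul_right_cancel ?_
    simp only [qPochhammer_succ k, qPochhammer_succ j] at hk hk₁ hn ⊢
    linear_combination hn - X ^ (j + 1) * (1 - X ^ (k + 1)) * hk
      - (1 - X ^ (j + 1)) * hk₁

lemma qBinomial_add_two_add_two (n k : ℕ) :
    qBinomial (n + 2) (k + 2) = (X : R⟦X⟧) ^ (n - k) * qBinomial n k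
      + (1 + X ^ (n + 1)) * qBinomial n (k + 1) + X ^ (k + 2) * qBinomial n (k + 2) := by
  rw [show n + 2 = n + 1 + 1 by rfl, show k + 2 = k + 1 + 1 by rfl, qBinomial_succ_succ,
    qBinomial_succ_succ' n k, qBinomial_succ_succ' n (k + 1)]
  rcases lt_or_ge n (k + 1) with h | h
  · rw [qBinomial_eq_zero_of_lt h, qBinomial_eq_zero_of_lt (by omega : n < k + 1 + 1)]
    ring
  · rw [show n + 1 = k + 1 + 1 + (n - (k + 1)) by omega, pow_add]
    ring

lemma qBinomial_add_two_one (n : ℕ) :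
    qBinomial (n + 2) 1 = (X : R⟦X⟧) * qBinomial n 1 + (1 + X ^ (n + 1)) := by
  rw [show n + 2 = n + 1 + 1 by rfl, qBinomial_succ_succ' (n + 1) 0, qBinomial_succ_succ n 0]
  simp only [Nat.sub_zero, qBinomial_zero_right]
  ring

lemma C_add_X_mul_one_add_C_mul_X (a b : R⟦X⟧) :
    (Polynomial.C a + Polynomial.X) * (1 + Polynomial.C b * Polynomial.X)
      = Polynomial.C a + Polynomial.C (1 + a * b) * Polynomial.X
        + Polynomial.C b * Polynomial.X ^ 2 := by
  simp only [map_add, map_one, map_mul]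
  ring

noncomputable def jacobiCoeff (N k : ℕ) : R⟦X⟧ :=
  qBinomial (2 * N) k * X ^ triangle ((k : ℤ) - N)

lemma jacobiCoeff_succ_zero (N : ℕ) :
    jacobiCoeff (N + 1) 0 = jacobiCoeff N 0 * (X : R⟦X⟧) ^ N := by
  have hT := triangle_of_eq_add_one (show -(N : ℤ) = -↑(N + 1) + 1 by push_cast; ring)
  simp only [jacobiCoeff, qBinomial_zero_right, one_mul, Nat.cast_zero, zero_sub, ← pow_add]
  congr 1
  omega

lemma jacobiCoeff_succ_one (N : ℕ) :
    jacobiCoeff (N + 1) 1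
      = jacobiCoeff N 1 * (X : R⟦X⟧) ^ N + jacobiCoeff N 0 * (1 + X ^ (2 * N + 1)) := by
  have hT := triangle_of_eq_add_one (show 1 - (N : ℤ) = -N + 1 by ring)
  have hX : (X : R⟦X⟧) ^ triangle (1 - (N : ℤ)) * X ^ N = X * X ^ triangle (-(N : ℤ)) := by
    rw [← pow_succ', ← pow_add]; congr 1; omega
  simp only [jacobiCoeff, qBinomial_zero_right, Nat.cast_one, Nat.cast_zero, zero_sub,
    show 2 * (N + 1) = 2 * N + 2 by ring, qBinomial_add_two_one,
    show 1 - ((N + 1 : ℕ) : ℤ) = -N by push_cast; ring]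
  linear_combination -qBinomial (2 * N) 1 * hX

lemma jacobiCoeff_succ_add_two (N k : ℕ) :
    jacobiCoeff (N + 1) (k + 2) = jacobiCoeff N (k + 2) * (X : R⟦X⟧) ^ N
      + jacobiCoeff N (k + 1) * (1 + X ^ (2 * N + 1)) + jacobiCoeff N k * X ^ (N + 1) := by
  have hT₁ := triangle_of_eq_add_one (show (k : ℤ) + 2 - N = k + 1 - N + 1 by ring)
  have hT₀ := triangle_of_eq_add_one (show (k : ℤ) + 1 - N = k - N + 1 by ring)
  have hX₂ : (X : R⟦X⟧) ^ triangle ((k : ℤ) + 2 - N) * X ^ N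
      = X ^ (k + 2) * X ^ triangle ((k : ℤ) + 1 - N) := by
    rw [← pow_add, ← pow_add]; congr 1; omega
  simp only [jacobiCoeff, show 2 * (N + 1) = 2 * N + 2 by ring, qBinomial_add_two_add_two]
  push_cast
  rw [show (k : ℤ) + 2 - (N + 1) = k + 1 - N by ring]
  rcases le_or_gt k (2 * N) with hk | hk
  · have hX₀ : (X : R⟦X⟧) ^ triangle ((k : ℤ) - N) * X ^ (N + 1)
        = X ^ (2 * N - k) * X ^ triangle ((k : ℤ) + 1 - N) := by
      rw [← pow_add, ← pow_add]; congr 1; omega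
    linear_combination -qBinomial (2 * N) (k + 2) * hX₂ - qBinomial (2 * N) k * hX₀
  · rw [qBinomial_eq_zero_of_lt hk]
    linear_combination -qBinomial (2 * N) (k + 2) * hX₂

lemma coeff_prod_C_add_X_mul_one_add_C_mul_X (N k : ℕ) :
    (∏ j ∈ range N, (Polynomial.C ((X : R⟦X⟧) ^ j) + Polynomial.X)
      * (1 + Polynomial.C (X ^ (j + 1)) * Polynomial.X)).coeff k = jacobiCoeff N k := by
  induction N generalizing k with
  | zero => cases k <;> simp [jacobiCoeff, triangle, Polynomial.coeff_one]
  | succ N ih =>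
    rw [prod_range_succ, C_add_X_mul_one_add_C_mul_X, ← pow_add,
      show N + (N + 1) = 2 * N + 1 by ring]
    generalize (∏ j ∈ range N, (Polynomial.C ((X : R⟦X⟧) ^ j) + Polynomial.X)
      * (1 + Polynomial.C (X ^ (j + 1)) * Polynomial.X)) = p at ih ⊢
    rcases k with _ | _ | k <;>
      simp only [mul_add, ← mul_assoc, Polynomial.coeff_add, Polynomial.coeff_mul_C,
        Polynomial.coeff_mul_X_pow', Polynomial.coeff_mul_X, Polynomial.coeff_mul_X_zero, ih]
    · rw [jacobiCoeff_succ_zero, if_neg (by omega), add_zero, add_zero]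
    · rw [zero_add, jacobiCoeff_succ_one, if_neg (by omega), add_zero]
      ring
    · rw [jacobiCoeff_succ_add_two, if_pos (by omega), show k + 1 + 1 - 2 = k by omega]
      ring

lemma prod_one_add_mul_prod_one_add (N : ℕ) :
    (∏ j ∈ range N, (1 + (X : R⟦X⟧) ^ j)) * ∏ j ∈ range N, (1 + X ^ (j + 1))
      = ∑ k ∈ range (2 * N + 1), jacobiCoeff N k := by
  have hdeg : (∏ j ∈ range N, (Polynomial.C ((X : R⟦X⟧) ^ j) + Polynomial.X)
      * (1 + Polynomial.C (X ^ (j + 1)) * Polynomial.X)).natDegree < 2 * N + 1 :=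
    Nat.lt_succ_of_le <| Polynomial.natDegree_le_iff_coeff_eq_zero.mpr fun k hk => by
      rw [coeff_prod_C_add_X_mul_one_add_C_mul_X, jacobiCoeff, qBinomial_eq_zero_of_lt hk, zero_mul]
  have h := Polynomial.eval_eq_sum_range' hdeg 1
  simp only [Polynomial.eval_prod, Polynomial.eval_mul, Polynomial.eval_add, Polynomial.eval_C,
    Polynomial.eval_X, Polynomial.eval_one, mul_one, one_pow,
    coeff_prod_C_add_X_mul_one_add_C_mul_X] at h
  rw [← prod_mul_distrib, ← h]
  exact prod_congr rfl fun j _ => by ring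

lemma X_pow_dvd_qPochhammer_mul_qBinomial_sub_one {N k j : ℕ} (hN : k ≤ N) (hj : k ≤ j) :
    (X : R⟦X⟧) ^ (k + 1) ∣ qPochhammer N * qBinomial (k + j) k - 1 := by
  obtain ⟨a, rfl⟩ := Nat.exists_eq_add_of_le hN
  obtain ⟨b, rfl⟩ := Nat.exists_eq_add_of_le hj
  have hQ := qBinomial_mul_qPochhammer (R := R) k (k + b)
  rw [show k + (k + b) = k + b + k by ring, qPochhammer_add (k + b) k] at hQ
  have hsplit : qPochhammer (k + a) * qBinomial (k + b + k) k
      = (∏ i ∈ range a, (1 - (X : R⟦X⟧) ^ (k + i + 1)))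
        * ∏ i ∈ range k, (1 - (X : R⟦X⟧) ^ (k + b + i + 1)) := by
    refine (isUnit_qPochhammer (k + b)).mul_right_cancel ?_
    rw [qPochhammer_add k a]
    linear_combination (∏ i ∈ range a, (1 - (X : R⟦X⟧) ^ (k + i + 1))) * hQ
  rw [show k + (k + b) = k + b + k by ring, hsplit]
  refine dvd_mul_sub_one (X_pow_dvd_prod_one_sub_sub_one k a) ?_
  exact (pow_dvd_pow _ (by omega)).trans (X_pow_dvd_prod_one_sub_sub_one (k + b) k)

lemma X_pow_dvd_qPochhammer_mul_qBinomial_two_mul_sub_one {N k : ℕ} (hk : k ≤ 2 * N) :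
    (X : R⟦X⟧) ^ (min k (2 * N - k) + 1) ∣ qPochhammer N * qBinomial (2 * N) k - 1 := by
  rcases le_or_gt k N with h | h
  · rw [min_eq_left (by omega), show 2 * N = k + (2 * N - k) by omega]
    exact X_pow_dvd_qPochhammer_mul_qBinomial_sub_one h (by omega)
  · have h' := X_pow_dvd_qPochhammer_mul_qBinomial_sub_one (R := R) (N := N) (k := 2 * N - k)
      (j := k) (by omega) (by omega)
    rwa [qBinomial_add_comm, Nat.sub_add_cancel hk, ← min_eq_right (by omega : 2 * N - k ≤ k)]
      at h'

lemma X_pow_dvd_qPochhammer_mul_jacobiCoeff_sub {N k : ℕ} (hk : k ≤ 2 * N) :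
    (X : R⟦X⟧) ^ N ∣ qPochhammer N * jacobiCoeff N k - X ^ triangle ((k : ℤ) - N) := by
  have hT := abs_le.mp (abs_le_triangle_add_one ((k : ℤ) - N))
  rw [jacobiCoeff, ← mul_assoc, ← sub_one_mul]
  have hN : N ≤ min k (2 * N - k) + 1 + triangle ((k : ℤ) - N) := by omega
  refine (pow_dvd_pow X hN).trans ?_
  rw [pow_add]
  exact mul_dvd_mul (X_pow_dvd_qPochhammer_mul_qBinomial_two_mul_sub_one hk) dvd_rfl

lemma sum_Ico_neg_eq_sum_range {M : Type*} [AddCommMonoid M] (f : ℤ → M) (N : ℕ) :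
    ∑ t ∈ Ico (-(N : ℤ)) N, f t = ∑ k ∈ range (2 * N), f ((k : ℤ) - N) := by
  symm
  refine sum_nbij' (fun k => (k : ℤ) - N) (fun t => (t + N).toNat) ?_ ?_ ?_ ?_ fun _ _ => rfl <;>
    intro x hx <;> simp only [mem_Ico, mem_range] at hx ⊢ <;> omega

theorem X_pow_dvd_qPochhammer_mul_prod_sub_sum (N : ℕ) :
    (X : R⟦X⟧) ^ N ∣
      qPochhammer N * ((∏ j ∈ range N, (1 + X ^ j)) * ∏ j ∈ range N, (1 + X ^ (j + 1)))
      - ∑ t ∈ Ico (-(N : ℤ)) N, X ^ triangle t := by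
  rw [prod_one_add_mul_prod_one_add, sum_Ico_neg_eq_sum_range, mul_sum, sum_range_succ,
    add_sub_right_comm, ← sum_sub_distrib]
  refine dvd_add (dvd_sum fun k hk => X_pow_dvd_qPochhammer_mul_jacobiCoeff_sub ?_) ?_
  · exact (mem_range.mp hk).le.trans (by omega)
  · have hT := two_mul_triangle (((2 * N : ℕ) : ℤ) - N)
    have hN : N ≤ triangle (((2 * N : ℕ) : ℤ) - N) := by push_cast at hT ⊢; nlinarith
    rw [jacobiCoeff, qBinomial_self, one_mul]
    exact dvd_mul_of_dvd_right (pow_dvd_pow X hN) _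

end JacobiTripleProduct

open JacobiTripleProduct in
/-- `(q;q)_∞ (-1;q)_∞ (-q;q)_∞ = ∑_{n∈ℤ} q^{n(n+1)/2}`, stated coefficientwise: the
`m`-th coefficient of each side is already attained by the partial products/sums
shown (every `n ∈ ℤ` with `n(n+1)/2 ≤ m` satisfies `-(m+1) ≤ n ≤ m`). -/
theorem stmt10 (m : ℕ) :
    PowerSeries.coeff (R := ℤ) m
      ((∏ k ∈ Finset.range (m + 1), (1 - (X : ℤ⟦X⟧) ^ (k + 1))) *
        (∏ k ∈ Finset.range (m + 1), (1 + (X : ℤ⟦X⟧) ^ k)) *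
        ∏ k ∈ Finset.range (m + 1), (1 + (X : ℤ⟦X⟧) ^ (k + 1))) =
    PowerSeries.coeff (R := ℤ) m
      (∑ n ∈ Finset.Icc (-(m : ℤ) - 1) (m : ℤ),
        (X : ℤ⟦X⟧) ^ ((n * (n + 1) / 2).toNat)) := by
  have hdvd := X_pow_dvd_iff.mp (X_pow_dvd_qPochhammer_mul_prod_sub_sum (R := ℤ) (m + 1)) m
    (lt_add_one m)
  rw [map_sub, sub_eq_zero, ← mul_assoc] at hdvd
  have hIcc :
      Finset.Icc (-(m : ℤ) - 1) m = Finset.Ico (-((m + 1 : ℕ) : ℤ)) (m + 1 : ℕ) := by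
    ext; simp only [Finset.mem_Icc, Finset.mem_Ico]; omega
  rw [hIcc]
  exact hdvd
end

section
/- For every n ≥ 0, f(n) ≡ p(n) (mod 4), where f(n) is defined by ∑_{n≥0} f(n) q^n = ∏_{i≥1} (1+q^{2i-1}) / ((1-q^{4i})(1+q^{4i-2})^2) and p(n) is the partition function. -/
/-!
Modulo 4 we have `(1 + x)^2 ≡ (1 - x)^2`, so the denominator of the product becomes
`(q^4; q^4)_∞ (q^2; q^4)_∞^2`. Over any commutative ring,
`∏ (1 + q^{2i-1}) · (q; q)_∞ = (q^4; q^4)_∞ (q^2; q^4)_∞^2`: split `(q; q)_∞` into its odd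
and even factors, `(q; q^2)_∞ (q^2; q^4)_∞ (q^4; q^4)_∞`, and use
`(1 + q^{2i-1})(1 - q^{2i-1}) = 1 - q^{4i-2}`. Hence modulo 4 the product is `1 / (q; q)_∞`,
the generating function of `p(n)`.

The hypothesis only constrains the coefficients of partial products. Since the `k`-th factor of
each product is `≡ 1 mod q^{k+1}`, the products converge coefficientwise and the `m`-th coefficient
of the infinite product is that of the partial product over `k ≤ m`.
-/

open Finset PowerSeries Filter
open PowerSeries.WithPiTopology

namespace YoungDiagram

theorem card_eq_sum_rowLens (μ : YoungDiagram) : μ.card = μ.rowLens.sum := by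
  rw [YoungDiagram.card, card_eq_sum_card_fiberwise (f := Prod.fst) (t := range (μ.colLen 0)),
    rowLens, ← Multiset.sum_coe, ← Multiset.map_coe, ← Multiset.range]
  · exact sum_congr rfl fun i _ => (μ.rowLen_eq_card).symm
  · intro c hc
    exact mem_range.2 (mem_iff_lt_colLen.1 (μ.up_left_mem le_rfl (Nat.zero_le _) hc))

theorem rowLens_ofRowLens_sort (s : Multiset ℕ) (hs : ∀ x ∈ s, 0 < x) :
    (ofRowLens (s.sort (· ≥ ·)) (Multiset.pairwise_sort s _).sortedGE).rowLens = s.sort (· ≥ ·) :=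
  rowLens_ofRowLens_eq_self fun x hx => hs x ((Multiset.mem_sort _).1 hx)

def equivPartition (n : ℕ) : {μ : YoungDiagram // μ.card = n} ≃ n.Partition where
  toFun μ := ⟨μ.1.rowLens, fun hx => μ.1.pos_of_mem_rowLens _ (Multiset.mem_coe.1 hx),
    by rw [Multiset.sum_coe, ← card_eq_sum_rowLens, μ.2]⟩
  invFun p := ⟨ofRowLens (p.parts.sort (· ≥ ·)) (Multiset.pairwise_sort _ _).sortedGE, by
    rw [card_eq_sum_rowLens, rowLens_ofRowLens_sort _ fun _ => p.parts_pos, ← Multiset.sum_coe,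
      Multiset.sort_eq, p.parts_sum]⟩
  left_inv μ := by
    refine Subtype.ext (Eq.trans ?_ ofRowLens_to_rowLens_eq_self)
    dsimp only
    congr 1
    rw [Multiset.coe_sort]
    exact List.mergeSort_eq_self _ μ.1.rowLens_sorted.pairwise
  right_inv p := Nat.Partition.ext <| by
    simp only [rowLens_ofRowLens_sort _ fun _ => p.parts_pos, Multiset.sort_eq]

end YoungDiagram

section DvdSubOne

variable {α : Type*} [CommRing α] {d : α}

theorem dvd_mul_sub_one {a b : α} (ha : d ∣ a - 1) (hb : d ∣ b - 1) : d ∣ a * b - 1 := by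
  rw [show a * b - 1 = (a - 1) * b + (b - 1) by ring]
  exact dvd_add (dvd_mul_of_dvd_left ha b) hb

theorem dvd_prod_sub_one {ι : Type*} {s : Finset ι} {g : ι → α} (h : ∀ i ∈ s, d ∣ g i - 1) :
    d ∣ ∏ i ∈ s, g i - 1 :=
  prod_induction g (fun x => d ∣ x - 1) (fun _ _ => dvd_mul_sub_one) (by simp) h

theorem dvd_pow_sub_one {a : α} (ha : d ∣ a - 1) (n : ℕ) : d ∣ a ^ n - 1 := by
  simpa using dvd_prod_sub_one (s := range n) fun _ _ => ha

end DvdSubOne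

namespace PowerSeries

variable {R : Type*} [CommRing R]

theorem X_pow_dvd_one_sub_X_pow_sub_one {n e : ℕ} (h : n ≤ e) :
    (X : R⟦X⟧) ^ n ∣ 1 - X ^ e - 1 := by
  simpa using pow_dvd_pow X h

theorem X_pow_dvd_one_add_X_pow_sub_one {n e : ℕ} (h : n ≤ e) :
    (X : R⟦X⟧) ^ n ∣ 1 + X ^ e - 1 := by
  simpa using pow_dvd_pow X h

theorem coeff_mul_eq_of_X_pow_dvd_sub {m : ℕ} {a b : R⟦X⟧} (h : X ^ (m + 1) ∣ a - b)
    (φ : R⟦X⟧) : coeff m (φ * a) = coeff m (φ * b) := by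
  rw [← sub_eq_zero, ← map_sub, ← mul_sub]
  exact X_pow_dvd_iff.1 (dvd_mul_of_dvd_right h φ) m m.lt_succ_self

theorem X_pow_dvd_prod_range_sub_prod_range {g : ℕ → R⟦X⟧}
    (hg : ∀ k, X ^ (k + 1) ∣ g k - 1) {m N : ℕ} (hN : m + 1 ≤ N) :
    X ^ (m + 1) ∣ ∏ k ∈ range N, g k - ∏ k ∈ range (m + 1), g k := by
  rw [← prod_range_mul_prod_Ico g hN, ← mul_sub_one]
  refine dvd_mul_of_dvd_right (dvd_prod_sub_one fun k hk => ?_) _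
  have hmk : m + 1 ≤ k + 1 := by grind
  exact (pow_dvd_pow X hmk).trans (hg k)

section Topological

variable [TopologicalSpace R]

theorem multipliable_of_X_pow_dvd_sub_one {g : ℕ → R⟦X⟧} (hg : ∀ k, X ^ (k + 1) ∣ g k - 1) :
    Multipliable g := by
  simpa using multipliable_one_add_of_tendsto_order_atTop_nhds_top R (f := fun k => g k - 1) <|
    ENat.tendsto_nhds_top_iff_natCast_lt.2 fun n => eventually_atTop.2 ⟨n, fun k hk =>
      (Nat.cast_lt.2 (Nat.lt_succ_of_le hk)).trans_le (nat_le_order _ _ (X_pow_dvd_iff.1 (hg k)))⟩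

theorem multipliable_one_sub_X_pow_of_le {e : ℕ → ℕ} (he : ∀ k, k + 1 ≤ e k) :
    Multipliable fun k => (1 : R⟦X⟧) - X ^ e k :=
  multipliable_of_X_pow_dvd_sub_one fun k => X_pow_dvd_one_sub_X_pow_sub_one (he k)

variable (R) in
/-- The `q`-Pochhammer symbol `(q^b; q^a)_∞ = ∏_{k ≥ 0} (1 - q^{ak+b})`. -/
noncomputable def qPochhammer (b a : ℕ) : R⟦X⟧ := ∏' k, (1 - X ^ (a * k + b))

variable [T2Space R]

theorem X_pow_dvd_tprod_sub_prod_range {g : ℕ → R⟦X⟧} (hg : ∀ k, X ^ (k + 1) ∣ g k - 1)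
    (m : ℕ) : X ^ (m + 1) ∣ ∏' k, g k - ∏ k ∈ range (m + 1), g k := by
  refine X_pow_dvd_iff.2 fun j hj => sub_eq_zero.2 (tendsto_nhds_unique
    (((continuous_coeff R j).tendsto _).comp
      (multipliable_of_X_pow_dvd_sub_one hg).hasProd.tendsto_prod_nat) ?_)
  refine tendsto_atTop_of_eventually_const fun N (hN : m + 1 ≤ N) => ?_
  exact sub_eq_zero.1 <| (map_sub _ _ _).symm.trans <|
    X_pow_dvd_iff.1 (X_pow_dvd_prod_range_sub_prod_range hg hN) j hj

theorem isUnit_tprod_of_X_pow_dvd_sub_one {g : ℕ → R⟦X⟧} (hg : ∀ k, X ^ (k + 1) ∣ g k - 1) :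
    IsUnit (∏' k, g k) := by
  have h := dvd_add (X_pow_dvd_tprod_sub_prod_range hg 0) (hg 0)
  rw [prod_range_one, zero_add, pow_one, sub_add_sub_cancel, X_dvd_iff, map_sub, map_one,
    sub_eq_zero] at h
  exact isUnit_iff_constantCoeff.2 (h ▸ isUnit_one)

theorem mul_tprod_eq_tprod_of_coeff_prod_range {g h : ℕ → R⟦X⟧}
    (hg : ∀ k, X ^ (k + 1) ∣ g k - 1) (hh : ∀ k, X ^ (k + 1) ∣ h k - 1) {φ : R⟦X⟧}
    (H : ∀ m, coeff m (φ * ∏ k ∈ range (m + 1), g k) = coeff m (∏ k ∈ range (m + 1), h k)) :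
    φ * ∏' k, g k = ∏' k, h k := by
  ext m
  rw [coeff_mul_eq_of_X_pow_dvd_sub (X_pow_dvd_tprod_sub_prod_range hg m), H m,
    ← one_mul (∏' k, h k), coeff_mul_eq_of_X_pow_dvd_sub (X_pow_dvd_tprod_sub_prod_range hh m),
    one_mul]

variable [IsTopologicalRing R]

theorem qPochhammer_eq_mul {a b : ℕ} (ha : 0 < a) (hb : 0 < b) :
    qPochhammer R b a = qPochhammer R b (2 * a) * qPochhammer R (a + b) (2 * a) := by
  rw [qPochhammer, ← tprod_even_mul_odd]
  · congr 1 <;> exact tprod_congr fun k => by ring_nf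
  all_goals exact multipliable_one_sub_X_pow_of_le fun k => by nlinarith

theorem powerSeriesMk_card_partition_mul_qPochhammer :
    PowerSeries.mk (fun n => (Fintype.card n.Partition : R)) * qPochhammer R 1 1 = 1 := by
  have h := (Nat.Partition.hasProd_powerSeriesMk_card_restricted R fun _ => True).mul
    (multipliable_one_sub_X_pow R).hasProd
  have h1 (i : ℕ) : (∑' j, (X : R⟦X⟧) ^ ((i + 1) * j)) * (1 - X ^ (i + 1)) = 1 := by
    simp_rw [pow_mul]
    exact tsum_pow_mul_one_sub_of_constantCoeff_eq_zero (by simp)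
  simp only [if_true, h1] at h
  simpa [Nat.Partition.restricted, qPochhammer] using h.unique hasProd_one

theorem tprod_one_add_X_pow_odd_mul_qPochhammer :
    (∏' k, (1 + (X : R⟦X⟧) ^ (2 * k + 1))) * qPochhammer R 1 1 =
      qPochhammer R 4 4 * qPochhammer R 2 4 ^ 2 := by
  have hodd : (∏' k, (1 + (X : R⟦X⟧) ^ (2 * k + 1))) * qPochhammer R 1 2 = qPochhammer R 2 4 := by
    rw [qPochhammer, qPochhammer, ← Multipliable.tprod_mul
      (multipliable_of_X_pow_dvd_sub_one fun _ => X_pow_dvd_one_add_X_pow_sub_one (by omega))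
      (multipliable_one_sub_X_pow_of_le fun k => by omega)]
    exact tprod_congr fun k => by ring
  have hsplit :
      qPochhammer R 1 1 = qPochhammer R 1 2 * (qPochhammer R 2 4 * qPochhammer R 4 4) := by
    rw [qPochhammer_eq_mul one_pos one_pos,
      qPochhammer_eq_mul (a := 2 * 1) (b := 1 + 1) (by norm_num) (by norm_num)]
    rfl
  rw [hsplit, ← hodd]
  ring

end Topological

end PowerSeries

theorem eq_card_partition_of_four_eq_zero {R : Type*} [CommRing R] (h4 : (4 : R) = 0)
    (f : ℕ → R)
    (hf : ∀ m : ℕ,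
      coeff m (mk f * ∏ k ∈ range (m + 1),
        ((1 - (X : R⟦X⟧) ^ (4 * (k + 1))) * (1 + (X : R⟦X⟧) ^ (4 * k + 2)) ^ 2)) =
      coeff m (∏ k ∈ range (m + 1), (1 + (X : R⟦X⟧) ^ (2 * k + 1))))
    (n : ℕ) : f n = Fintype.card n.Partition := by
  let _ : TopologicalSpace R := ⊥
  have _ : DiscreteTopology R := ⟨rfl⟩
  have hB (k : ℕ) : X ^ (k + 1) ∣ 1 + (X : R⟦X⟧) ^ (2 * k + 1) - 1 :=
    X_pow_dvd_one_add_X_pow_sub_one (by omega)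
  have hD (k : ℕ) :
      X ^ (k + 1) ∣ (1 - (X : R⟦X⟧) ^ (4 * (k + 1))) * (1 + X ^ (4 * k + 2)) ^ 2 - 1 :=
    dvd_mul_sub_one (X_pow_dvd_one_sub_X_pow_sub_one (by omega))
      (dvd_pow_sub_one (X_pow_dvd_one_add_X_pow_sub_one (by omega)) 2)
  have hFD := mul_tprod_eq_tprod_of_coeff_prod_range hD hB hf
  have hD4 : ∏' k, (1 - (X : R⟦X⟧) ^ (4 * (k + 1))) * (1 + X ^ (4 * k + 2)) ^ 2 =
      qPochhammer R 4 4 * qPochhammer R 2 4 ^ 2 := by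
    have h4' : (4 : R⟦X⟧) = 0 := by rw [← map_ofNat C, h4, map_zero]
    have hm2 := multipliable_one_sub_X_pow_of_le (R := R) (e := (4 * · + 2)) fun k => by omega
    have hm4 := multipliable_one_sub_X_pow_of_le (R := R) (e := (4 * · + 4)) fun k => by omega
    rw [qPochhammer, qPochhammer, ← hm2.tprod_pow, ← hm4.tprod_mul (hm2.pow 2)]
    exact tprod_congr fun k => by linear_combination (1 - X ^ (4 * k + 4)) * X ^ (4 * k + 2) * h4'
  have hFE : mk f * qPochhammer R 1 1 = 1 :=
    (isUnit_tprod_of_X_pow_dvd_sub_one hB).mul_left_inj.1 <| by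
      linear_combination mk f * tprod_one_add_X_pow_odd_mul_qPochhammer (R := R) - mk f * hD4 + hFD
  have hP := powerSeriesMk_card_partition_mul_qPochhammer (R := R)
  simpa using congrArg (coeff n)
    (by linear_combination (mk fun n => (Fintype.card n.Partition : R)) * hFE - mk f * hP :
      mk f = mk fun n => (Fintype.card n.Partition : R))

/-- `f(n) ≡ p(n) (mod 4)`, where `f` is defined by
`∑ f(n) qⁿ = ∏_{i≥1} (1+q^{2i-1}) / ((1-q^{4i})(1+q^{4i-2})^2)`.  The defining
generating-function identity is taken in the cross-multiplied form
`(∑ f(n) qⁿ) · ∏_{i≥1}(1-q^{4i})(1+q^{4i-2})^2 = ∏_{i≥1}(1+q^{2i-1})`, stated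
coefficientwise: the `m`-th coefficient of each side is already attained by the
partial products shown. `p(n)` is the number of partitions of `n`, realized as the
number of Young diagrams with `n` cells. -/
theorem stmt13 (f : ℕ → ℤ)
    (hf : ∀ m : ℕ,
      PowerSeries.coeff m
        (PowerSeries.mk f *
          ∏ k ∈ Finset.range (m + 1),
            ((1 - (X : ℤ⟦X⟧) ^ (4 * (k + 1))) * (1 + (X : ℤ⟦X⟧) ^ (4 * k + 2)) ^ 2)) =
      PowerSeries.coeff m
        (∏ k ∈ Finset.range (m + 1), (1 + (X : ℤ⟦X⟧) ^ (2 * k + 1)))) :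
    ∀ n : ℕ, f n ≡ (Nat.card {μ : YoungDiagram // μ.card = n} : ℤ) [ZMOD 4] := by
  intro n
  have hmk : map (Int.castRingHom (ZMod 4)) (mk f) = mk fun j => (f j : ZMod 4) := by
    ext; simp
  have hf4 (m : ℕ) := congrArg (Int.castRingHom (ZMod 4)) (hf m)
  simp only [← coeff_map, map_mul, map_prod, map_sub, map_add, map_pow, map_one, map_X, hmk] at hf4
  have key := eq_card_partition_of_four_eq_zero (by decide) _ hf4 n
  rw [Nat.card_congr (YoungDiagram.equivPartition n), Nat.card_eq_fintype_card]
  exact (ZMod.intCast_eq_intCast_iff _ _ 4).1 (by simpa using key)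
end

section
/- Let λ be a partition of n+1, v=(i,j) an inner corner, and λ⁻ the partition of n obtained by removing v. Let H_e(μ) denote the number of squares in the Young diagram of μ with even hook length. Then H_e(λ) ≡ H_e(λ⁻) (mod 2) if and only if λ_i ≡ λ'_j (mod 2). -/
/-- The hook length of the square `(r, c)` of a Young diagram. -/
def hookLen (mu : YoungDiagram) (r c : Nat) : Nat :=
  mu.rowLen r + mu.colLen c - r - c - 1

/-- The number of squares of even hook length in a Young diagram. -/
def evenHooks (mu : YoungDiagram) : Nat :=
  (mu.cells.filter (fun x => Even (hookLen mu x.1 x.2))).card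

lemma ind_eq (h : ℕ) : (if Even h then (1 : ZMod 2) else 0) = (h : ZMod 2) + 1 := by
  rcases Nat.even_or_odd h with he | ho
  · rw [if_pos he, (ZMod.natCast_eq_zero_iff h 2).mpr he.two_dvd]
    ring
  · have hne : ¬ Even h := by
      obtain ⟨k, hk⟩ := ho
      subst hk
      simp [Nat.even_iff, Nat.add_mod, Nat.mul_mod]
    obtain ⟨k, hk⟩ := ho
    rw [if_neg hne, hk]
    have h2 : (2 : ZMod 2) = 0 := rfl
    push_cast
    linear_combination (-1 - (k : ZMod 2)) * h2

lemma cast_evenHooks (mu : YoungDiagram) :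
    ((evenHooks mu : ZMod 2)) =
      (∑ x ∈ mu.cells, (hookLen mu x.1 x.2 : ZMod 2)) + mu.card := by
  rw [evenHooks, Finset.card_filter]
  push_cast [apply_ite (Nat.cast : ℕ → ZMod 2)]
  have h1 : ∀ x ∈ mu.cells, (if Even (hookLen mu x.1 x.2) then (1 : ZMod 2) else 0)
      = (hookLen mu x.1 x.2 : ZMod 2) + 1 := fun x _ => ind_eq _
  rw [Finset.sum_congr rfl h1, Finset.sum_add_distrib, Finset.sum_const, nsmul_eq_mul, mul_one]

theorem stmt15 (n : ℕ) (μ ν : YoungDiagram) (i j : ℕ)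
    (hcard : μ.card = n + 1) (hmem : (i, j) ∈ μ.cells)
    (hν : ν.cells = μ.cells.erase (i, j)) :
    evenHooks μ ≡ evenHooks ν [MOD 2] ↔ μ.rowLen i ≡ μ.colLen j [MOD 2] := by
  have hmemμ : (i, j) ∈ μ := (YoungDiagram.mem_cells _).mp hmem
  have hmemν : ∀ x : ℕ × ℕ, x ∈ ν ↔ x ∈ μ ∧ x ≠ (i, j) := by
    intro x
    rw [← YoungDiagram.mem_cells, hν, Finset.mem_erase, YoungDiagram.mem_cells]
    tauto
  -- (i,j) is a corner
  have hr1 : (i, j + 1) ∉ μ := by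
    intro h
    have h2 : (i, j) ∈ ν := ν.up_left_mem le_rfl (by omega)
      ((hmemν _).mpr ⟨h, by simp⟩)
    exact ((hmemν _).mp h2).2 rfl
  have hc1 : (i + 1, j) ∉ μ := by
    intro h
    have h2 : (i, j) ∈ ν := ν.up_left_mem (by omega) le_rfl
      ((hmemν _).mpr ⟨h, by simp⟩)
    exact ((hmemν _).mp h2).2 rfl
  have hrow : μ.rowLen i = j + 1 := by
    have a := YoungDiagram.mem_iff_lt_rowLen.mp hmemμ
    have b : ¬ (j + 1 < μ.rowLen i) := fun h => hr1 (YoungDiagram.mem_iff_lt_rowLen.mpr h)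
    omega
  have hcol : μ.colLen j = i + 1 := by
    have a := YoungDiagram.mem_iff_lt_colLen.mp hmemμ
    have b : ¬ (i + 1 < μ.colLen j) := fun h => hc1 (YoungDiagram.mem_iff_lt_colLen.mpr h)
    omega
  have len_eq : ∀ a b : ℕ, (∀ c, c < a ↔ c < b) → a = b := by
    intro a b h
    have h1 := h a
    have h2 := h b
    omega
  -- helper to split a Prod inequality
  have prodne : ∀ r c : ℕ, (r, c) ≠ (i, j) → r ≠ i ∨ c ≠ j := by
    intro r c h
    by_contra hc
    push_neg at hc
    exact h (by rw [hc.1, hc.2])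
  have hνrow : ∀ r, ν.rowLen r = if r = i then j else μ.rowLen r := by
    intro r
    split
    · next h =>
      subst h
      refine len_eq _ _ fun c => ?_
      rw [← YoungDiagram.mem_iff_lt_rowLen, hmemν]
      constructor
      · rintro ⟨h1, h2⟩
        have hlt := YoungDiagram.mem_iff_lt_rowLen.mp h1
        rw [hrow] at hlt
        rcases prodne _ _ h2 with h3 | h3 <;> omega
      · intro h1
        refine ⟨YoungDiagram.mem_iff_lt_rowLen.mpr (by omega), fun hc => ?_⟩
        rw [Prod.mk.injEq] at hc
        omega
    · next h =>
      refine len_eq _ _ fun c => ?_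
      rw [← YoungDiagram.mem_iff_lt_rowLen, hmemν, ← YoungDiagram.mem_iff_lt_rowLen]
      constructor
      · exact fun h1 => h1.1
      · intro h1
        refine ⟨h1, fun hc => ?_⟩
        rw [Prod.mk.injEq] at hc
        exact h hc.1
  have hνcol : ∀ c, ν.colLen c = if c = j then i else μ.colLen c := by
    intro c
    split
    · next h =>
      subst h
      refine len_eq _ _ fun r => ?_
      rw [← YoungDiagram.mem_iff_lt_colLen, hmemν]
      constructor
      · rintro ⟨h1, h2⟩
        have hlt := YoungDiagram.mem_iff_lt_colLen.mp h1
        rw [hcol] at hlt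
        rcases prodne _ _ h2 with h3 | h3 <;> omega
      · intro h1
        refine ⟨YoungDiagram.mem_iff_lt_colLen.mpr (by omega), fun hc => ?_⟩
        rw [Prod.mk.injEq] at hc
        omega
    · next h =>
      refine len_eq _ _ fun r => ?_
      rw [← YoungDiagram.mem_iff_lt_colLen, hmemν, ← YoungDiagram.mem_iff_lt_colLen]
      constructor
      · exact fun h1 => h1.1
      · intro h1
        refine ⟨h1, fun hc => ?_⟩
        rw [Prod.mk.injEq] at hc
        exact h hc.2
  have hcardν : ν.card = n := by
    show ν.cells.card = n
    rw [hν, Finset.card_erase_of_mem hmem]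
    have h2 : μ.cells.card = n + 1 := hcard
    omega
  -- the set of cells of ν whose hook length changes, and its cardinality
  have hDcard : ((ν.cells.filter (fun x => x.1 = i ∨ x.2 = j)).card) = j + i := by
    have hDeq : ν.cells.filter (fun x => x.1 = i ∨ x.2 = j)
        = ((Finset.range j).image (fun c => (i, c))) ∪
          ((Finset.range i).image (fun r => (r, j))) := by
      ext ⟨r, c⟩
      simp only [Finset.mem_filter, Finset.mem_union, Finset.mem_image,
        Finset.mem_range, YoungDiagram.mem_cells, Prod.mk.injEq]
      rw [hmemν]
      constructor
      · rintro ⟨⟨h1, h2⟩, h3 | h3⟩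
        · subst h3
          have hlt := YoungDiagram.mem_iff_lt_rowLen.mp h1
          rw [hrow] at hlt
          rcases prodne _ _ h2 with h4 | h4
          · omega
          · exact Or.inl ⟨c, by omega, rfl, rfl⟩
        · subst h3
          have hlt := YoungDiagram.mem_iff_lt_colLen.mp h1
          rw [hcol] at hlt
          rcases prodne _ _ h2 with h4 | h4
          · exact Or.inr ⟨r, by omega, rfl, rfl⟩
          · omega
      · rintro (⟨c', hc', rfl, rfl⟩ | ⟨r', hr', rfl, rfl⟩)
        · exact ⟨⟨YoungDiagram.mem_iff_lt_rowLen.mpr (by omega),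
            fun hc => by rw [Prod.mk.injEq] at hc; omega⟩, Or.inl rfl⟩
        · exact ⟨⟨YoungDiagram.mem_iff_lt_colLen.mpr (by omega),
            fun hc => by rw [Prod.mk.injEq] at hc; omega⟩, Or.inr rfl⟩
    rw [hDeq, Finset.card_union_of_disjoint, Finset.card_image_of_injective,
      Finset.card_image_of_injective, Finset.card_range, Finset.card_range]
    · intro a b h; simpa using h
    · intro a b h; simpa using h
    · simp only [Finset.disjoint_left, Finset.mem_image, Finset.mem_range]
      rintro ⟨r, c⟩ ⟨c', hc', hh⟩ ⟨r', hr', hh'⟩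
      rw [Prod.mk.injEq] at hh hh'
      omega
  -- pointwise change of hook parity
  have hpoint : ∀ x ∈ ν.cells, (hookLen μ x.1 x.2 : ZMod 2) - (hookLen ν x.1 x.2 : ZMod 2)
      = if x.1 = i ∨ x.2 = j then (1 : ZMod 2) else 0 := by
    rintro ⟨r, c⟩ hx
    obtain ⟨h1, h2⟩ := (hmemν _).mp ((YoungDiagram.mem_cells _).mp hx)
    have hrl := YoungDiagram.mem_iff_lt_rowLen.mp h1
    have hcl := YoungDiagram.mem_iff_lt_colLen.mp h1
    by_cases hp : r = i ∨ c = j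
    · rw [if_pos hp]
      have hkey : hookLen μ r c = hookLen ν r c + 1 := by
        rw [hookLen, hookLen, hνrow, hνcol]
        rcases hp with h3 | h3
        · subst h3
          have h4 : c ≠ j := by
            rcases prodne _ _ h2 with h5 | h5
            · exact absurd rfl h5
            · exact h5
          rw [hrow] at hrl
          rw [if_pos rfl, if_neg h4, hrow]
          omega
        · subst h3
          have h4 : r ≠ i := by
            rcases prodne _ _ h2 with h5 | h5
            · exact h5
            · exact absurd rfl h5
          rw [hcol] at hcl
          rw [if_neg h4, if_pos rfl, hcol]
          omega
      rw [hkey]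
      push_cast
      ring
    · rw [if_neg hp]
      push_neg at hp
      have hkey : hookLen ν r c = hookLen μ r c := by
        rw [hookLen, hookLen, hνrow, hνcol, if_neg hp.1, if_neg hp.2]
      rw [hkey, sub_self]
  -- the key congruence
  have key : (evenHooks μ : ZMod 2) = (evenHooks ν : ZMod 2) + ((i + j : ℕ) : ZMod 2) := by
    have hij : hookLen μ i j = 1 := by
      rw [hookLen, hrow, hcol]; omega
    have hsum1 : ∑ x ∈ μ.cells, (hookLen μ x.1 x.2 : ZMod 2)
        = (hookLen μ i j : ZMod 2) + ∑ x ∈ ν.cells, (hookLen μ x.1 x.2 : ZMod 2) := by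
      rw [hν]
      exact (Finset.add_sum_erase μ.cells _ hmem).symm
    have hsum2 : ∑ x ∈ ν.cells, ((hookLen μ x.1 x.2 : ZMod 2) - (hookLen ν x.1 x.2 : ZMod 2))
        = (((j + i : ℕ)) : ZMod 2) := by
      rw [Finset.sum_congr rfl hpoint, Finset.sum_boole, hDcard]
    have hsum3 : ∑ x ∈ ν.cells, (hookLen μ x.1 x.2 : ZMod 2)
        = ∑ x ∈ ν.cells, (hookLen ν x.1 x.2 : ZMod 2) + ((j + i : ℕ) : ZMod 2) := by
      rw [← hsum2, Finset.sum_sub_distrib]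
      ring
    rw [cast_evenHooks, cast_evenHooks, hcard, hcardν, hsum1, hij, hsum3]
    have h2 : (2 : ZMod 2) = 0 := rfl
    push_cast
    linear_combination h2
  -- finish
  rw [← ZMod.natCast_eq_natCast_iff, key,
    show (μ.rowLen i ≡ μ.colLen j [MOD 2]) ↔ ((i + j) % 2 = 0) by
      rw [hrow, hcol]; unfold Nat.ModEq; omega]
  constructor
  · intro h
    have h2 : ((i + j : ℕ) : ZMod 2) = 0 := by linear_combination h
    rw [ZMod.natCast_eq_zero_iff] at h2
    omega
  · intro h
    have h2 : ((i + j : ℕ) : ZMod 2) = 0 :=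
      (ZMod.natCast_eq_zero_iff _ _).mpr (by omega)
    rw [h2, add_zero]
end

section
/- The number of partitions λ of n with O(λ) ≡ O(λ') (mod 4) equals the number of partitions of n whose Young diagram has an even number of squares with even hook length. -/
namespace Stmt17Aux

open Finset

/-- number of cells in odd rows -/
def A (μ : YoungDiagram) : ℕ := (μ.cells.filter (fun x => Odd x.1)).card
/-- number of cells in odd columns -/
def B (μ : YoungDiagram) : ℕ := (μ.cells.filter (fun x => Odd x.2)).card

lemma rowLen_le_card (μ : YoungDiagram) (r : ℕ) : μ.rowLen r ≤ μ.card := by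
  rw [μ.rowLen_eq_card]
  exact Finset.card_le_card (fun x hx => ((YoungDiagram.mem_row_iff.mp hx).1))

lemma colLen_le_card (μ : YoungDiagram) (c : ℕ) : μ.colLen c ≤ μ.card := by
  rw [μ.colLen_eq_card]
  exact Finset.card_le_card (fun x hx => ((YoungDiagram.mem_col_iff.mp hx).1))

lemma fst_lt_card {μ : YoungDiagram} {x : ℕ × ℕ} (hx : x ∈ μ.cells) : x.1 < μ.card := by
  have hxm : (x.1, x.2) ∈ μ := by simpa using hx
  have h0 : (x.1, 0) ∈ μ := μ.up_left_mem le_rfl (Nat.zero_le _) hxm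
  exact lt_of_lt_of_le (YoungDiagram.mem_iff_lt_colLen.mp h0) (colLen_le_card μ 0)

lemma snd_lt_card {μ : YoungDiagram} {x : ℕ × ℕ} (hx : x ∈ μ.cells) : x.2 < μ.card := by
  have hxm : (x.1, x.2) ∈ μ := by simpa using hx
  have h0 : (0, x.2) ∈ μ := μ.up_left_mem (Nat.zero_le _) le_rfl hxm
  exact lt_of_lt_of_le (YoungDiagram.mem_iff_lt_rowLen.mp h0) (rowLen_le_card μ 0)

lemma cells_eq (μ : YoungDiagram) :
    μ.cells = (Finset.range μ.card ×ˢ Finset.range μ.card).filter (fun x => x ∈ μ) := by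
  ext x
  simp only [Finset.mem_filter, Finset.mem_product, Finset.mem_range]
  constructor
  · intro hx
    exact ⟨⟨fst_lt_card hx, snd_lt_card hx⟩, (μ.mem_cells x).mp hx⟩
  · intro hx
    exact (μ.mem_cells x).mpr hx.2

lemma sum_cells {M : Type*} [AddCommMonoid M] (μ : YoungDiagram) (f : ℕ × ℕ → M) :
    ∑ x ∈ μ.cells, f x = ∑ r ∈ range μ.card, ∑ c ∈ range (μ.rowLen r), f (r, c) := by
  rw [cells_eq μ, Finset.sum_filter, Finset.sum_product]
  refine Finset.sum_congr rfl (fun r _ => ?_)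
  have hle : μ.rowLen r ≤ μ.card := rowLen_le_card μ r
  have h1 : ∀ c ∈ range μ.card,
      (if (r, c) ∈ μ then f (r, c) else 0) = (if c < μ.rowLen r then f (r, c) else 0) := by
    intro c _
    by_cases h : (r, c) ∈ μ
    · rw [if_pos h, if_pos (YoungDiagram.mem_iff_lt_rowLen.mp h)]
    · rw [if_neg h, if_neg (fun hc => h (YoungDiagram.mem_iff_lt_rowLen.mpr hc))]
  rw [Finset.sum_congr rfl h1, ← Finset.sum_filter]
  congr 1
  ext c
  simp only [Finset.mem_filter, Finset.mem_range]
  omega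

lemma card_eq_sum (μ : YoungDiagram) : μ.card = ∑ r ∈ range μ.card, μ.rowLen r := by
  have h := sum_cells μ (fun _ => (1 : ℕ))
  simpa using h

lemma A_eq_sum (μ : YoungDiagram) :
    A μ = ∑ r ∈ range μ.card, (if Odd r then μ.rowLen r else 0) := by
  rw [A, Finset.card_filter, sum_cells μ (fun x => if Odd x.1 then 1 else 0)]
  refine Finset.sum_congr rfl (fun r _ => ?_)
  by_cases h : Odd r <;> simp [h]

lemma half_count (m : ℕ) : (∑ c ∈ range m, if Odd c then 1 else 0) = m / 2 := by
  induction m with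
  | zero => simp
  | succ m ih =>
    rw [Finset.sum_range_succ, ih]
    rcases Nat.even_or_odd m with h | h
    · have hm := Nat.even_iff.mp h
      rw [if_neg (by rw [Nat.odd_iff]; omega)]
      omega
    · have hm := Nat.odd_iff.mp h
      rw [if_pos h]
      omega

lemma B_eq_sum (μ : YoungDiagram) :
    B μ = ∑ r ∈ range μ.card, μ.rowLen r / 2 := by
  rw [B, Finset.card_filter, sum_cells μ (fun x => if Odd x.2 then 1 else 0)]
  exact Finset.sum_congr rfl (fun r _ => half_count _)

lemma oddParts_eq_sum (μ : YoungDiagram) :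
    oddParts μ = ∑ r ∈ range μ.card, μ.rowLen r % 2 := by
  rw [oddParts, Finset.card_filter]
  refine Finset.sum_congr rfl (fun r _ => ?_)
  rcases Nat.even_or_odd (μ.rowLen r) with h | h
  · rw [if_neg (by simpa [Nat.odd_iff] using Nat.even_iff.mp h), Nat.even_iff.mp h]
  · rw [if_pos h, Nat.odd_iff.mp h]

lemma oddParts_eq (μ : YoungDiagram) : oddParts μ + 2 * B μ = μ.card := by
  rw [oddParts_eq_sum, B_eq_sum, Finset.mul_sum, ← Finset.sum_add_distrib]
  calc ∑ r ∈ range μ.card, (μ.rowLen r % 2 + 2 * (μ.rowLen r / 2))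
      = ∑ r ∈ range μ.card, μ.rowLen r := Finset.sum_congr rfl (fun r _ => by omega)
    _ = μ.card := (card_eq_sum μ).symm

lemma transpose_cells (μ : YoungDiagram) :
    μ.transpose.cells = μ.cells.map (Equiv.prodComm ℕ ℕ).toEmbedding := by
  ext x
  simp only [Finset.mem_map, Equiv.coe_toEmbedding, Equiv.prodComm_apply]
  rw [YoungDiagram.mem_cells, YoungDiagram.mem_transpose]
  constructor
  · intro h
    exact ⟨x.swap, by simpa using h, by simp⟩
  · rintro ⟨a, ha, rfl⟩
    simpa using ha

lemma sum_transpose {M : Type*} [AddCommMonoid M] (μ : YoungDiagram) (f : ℕ × ℕ → M) :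
    ∑ x ∈ μ.transpose.cells, f x = ∑ x ∈ μ.cells, f x.swap := by
  rw [transpose_cells, Finset.sum_map]
  rfl

lemma card_transpose (μ : YoungDiagram) : μ.transpose.card = μ.card := by
  rw [YoungDiagram.card, YoungDiagram.card, transpose_cells, Finset.card_map]

lemma B_transpose (μ : YoungDiagram) : B μ.transpose = A μ := by
  rw [A, B, Finset.card_filter, Finset.card_filter, sum_transpose]
  rfl

lemma A_transpose (μ : YoungDiagram) : A μ.transpose = B μ := by
  rw [A, B, Finset.card_filter, Finset.card_filter, sum_transpose]
  rfl

lemma cast_even {m : ℕ} (h : Even m) : (m : ZMod 2) = 0 := by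
  rw [← ZMod.natCast_mod m 2, Nat.even_iff.mp h, Nat.cast_zero]

lemma cast_odd {m : ℕ} (h : Odd m) : (m : ZMod 2) = 1 := by
  rw [← ZMod.natCast_mod m 2, Nat.odd_iff.mp h, Nat.cast_one]

lemma even_iff_cast {m : ℕ} : Even m ↔ (m : ZMod 2) = 0 := by
  constructor
  · exact cast_even
  · intro h
    rcases Nat.even_or_odd m with h2 | h2
    · exact h2
    · rw [cast_odd h2] at h
      exact absurd h one_ne_zero

lemma term_lemma (m r : ℕ) :
    ((m * (m + r) : ℕ) : ZMod 2) = ((m + if Odd r then m else 0 : ℕ) : ZMod 2) := by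
  rcases Nat.even_or_odd m with hm | hm
  · by_cases h : Odd r
    · rw [if_pos h, cast_even (hm.mul_right _), cast_even (hm.add hm)]
    · rw [if_neg h, add_zero, cast_even (hm.mul_right _), cast_even hm]
  · rcases Nat.even_or_odd r with hr | hr
    · rw [if_neg (by simpa [Nat.odd_iff, Nat.even_iff] using Nat.even_iff.mp hr), add_zero]
      have hodd : Odd (m * (m + r)) := hm.mul (hm.add_even hr)
      rw [cast_odd hodd, cast_odd hm]
    · rw [if_pos hr, cast_even ((Odd.add_odd hm hr).mul_left m), cast_even (Odd.add_odd hm hm)]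

/-- Row-side sum in `ZMod 2`. -/
lemma row_side (μ : YoungDiagram) :
    ∑ x ∈ μ.cells, ((μ.rowLen x.1 + x.1 : ℕ) : ZMod 2)
      = ((μ.card + A μ : ℕ) : ZMod 2) := by
  rw [sum_cells μ (fun x => ((μ.rowLen x.1 + x.1 : ℕ) : ZMod 2))]
  have step : ∀ r ∈ range μ.card,
      (∑ _c ∈ range (μ.rowLen r), ((μ.rowLen r + r : ℕ) : ZMod 2))
        = ((μ.rowLen r + if Odd r then μ.rowLen r else 0 : ℕ) : ZMod 2) := by
    intro r _
    rw [Finset.sum_const, Finset.card_range, nsmul_eq_mul,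
      ← term_lemma (μ.rowLen r) r]
    push_cast
    ring
  calc ∑ r ∈ range μ.card, ∑ _c ∈ range (μ.rowLen r), ((μ.rowLen r + r : ℕ) : ZMod 2)
      = ∑ r ∈ range μ.card,
          ((μ.rowLen r + if Odd r then μ.rowLen r else 0 : ℕ) : ZMod 2) :=
        Finset.sum_congr rfl step
    _ = ((∑ r ∈ range μ.card, (μ.rowLen r + if Odd r then μ.rowLen r else 0) : ℕ) : ZMod 2) :=
        (Nat.cast_sum _ _).symm
    _ = ((μ.card + A μ : ℕ) : ZMod 2) := by
        rw [Finset.sum_add_distrib, ← card_eq_sum, ← A_eq_sum]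

lemma hook_cell {μ : YoungDiagram} {x : ℕ × ℕ} (hx : x ∈ μ.cells) :
    (if Even (hookLen μ x.1 x.2) then (1 : ZMod 2) else 0)
      = ((μ.rowLen x.1 + x.1 + (μ.colLen x.2 + x.2) : ℕ) : ZMod 2) := by
  have hxm : (x.1, x.2) ∈ μ := by simpa using hx
  have hc : x.2 < μ.rowLen x.1 := YoungDiagram.mem_iff_lt_rowLen.mp hxm
  have hr : x.1 < μ.colLen x.2 := YoungDiagram.mem_iff_lt_colLen.mp hxm
  have key : μ.rowLen x.1 + x.1 + (μ.colLen x.2 + x.2)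
      = hookLen μ x.1 x.2 + 1 + 2 * (x.1 + x.2) := by
    unfold hookLen
    omega
  rw [key]
  push_cast
  rcases Nat.even_or_odd (hookLen μ x.1 x.2) with h | h
  · rw [if_pos h, cast_even h]
    ring_nf
    rw [show ((2 : ZMod 2)) = 0 by decide]
    ring
  · rw [if_neg (by simpa [Nat.odd_iff, Nat.even_iff] using Nat.odd_iff.mp h), cast_odd h]
    ring_nf
    rw [show ((2 : ZMod 2)) = 0 by decide]
    ring

lemma evenHooks_parity (μ : YoungDiagram) :
    ((evenHooks μ : ℕ) : ZMod 2) = ((A μ + B μ : ℕ) : ZMod 2) := by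
  have e1 : ((evenHooks μ : ℕ) : ZMod 2)
      = ∑ x ∈ μ.cells, (if Even (hookLen μ x.1 x.2) then (1 : ZMod 2) else 0) := by
    rw [evenHooks, Finset.sum_boole]
  rw [e1, Finset.sum_congr rfl (fun x hx => hook_cell hx)]
  have split : ∑ x ∈ μ.cells, ((μ.rowLen x.1 + x.1 + (μ.colLen x.2 + x.2) : ℕ) : ZMod 2)
      = (∑ x ∈ μ.cells, ((μ.rowLen x.1 + x.1 : ℕ) : ZMod 2))
        + ∑ x ∈ μ.cells, ((μ.colLen x.2 + x.2 : ℕ) : ZMod 2) := by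
    rw [← Finset.sum_add_distrib]
    refine Finset.sum_congr rfl (fun x _ => ?_)
    push_cast
    ring
  have col_side : ∑ x ∈ μ.cells, ((μ.colLen x.2 + x.2 : ℕ) : ZMod 2)
      = ((μ.card + B μ : ℕ) : ZMod 2) := by
    have h := row_side μ.transpose
    rw [sum_transpose μ] at h
    rw [card_transpose, A_transpose] at h
    rw [← h]
    exact Finset.sum_congr rfl (fun x _ => by rw [YoungDiagram.rowLen_transpose]; simp)
  rw [split, row_side, col_side]
  push_cast
  ring_nf
  rw [show ((2 : ZMod 2)) = 0 by decide]
  ring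

theorem pointwise (μ : YoungDiagram) :
    (oddParts μ ≡ oddParts μ.transpose [MOD 4]) ↔ Even (evenHooks μ) := by
  have h1 : oddParts μ + 2 * B μ = μ.card := oddParts_eq μ
  have h2 : oddParts μ.transpose + 2 * A μ = μ.card := by
    have := oddParts_eq μ.transpose
    rwa [B_transpose, card_transpose] at this
  have h3 : Even (evenHooks μ) ↔ Even (A μ + B μ) := by
    rw [even_iff_cast, even_iff_cast, evenHooks_parity]
  rw [h3, Nat.ModEq, Nat.even_iff]
  omega

end Stmt17Aux

theorem stmt17 (n : ℕ) :
    Nat.card {μ : YoungDiagram //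
        μ.card = n ∧ oddParts μ ≡ oddParts μ.transpose [MOD 4]} =
      Nat.card {μ : YoungDiagram // μ.card = n ∧ Even (evenHooks μ)} := by
  exact Nat.card_congr (Equiv.subtypeEquivRight (fun μ =>
    and_congr_right (fun _ => Stmt17Aux.pointwise μ)))
end

section
/- For any n ≥ 0, the number of partitions of n whose Young diagram contains an odd number of squares of even hook length is even. -/
/-- A fixed-point-free involution on a finset makes its cardinality even. -/
lemma even_card_of_invol {α : Type*} [DecidableEq α] (s : Finset α) (f : α → α)
    (hmem : ∀ a ∈ s, f a ∈ s) (hinv : ∀ a ∈ s, f (f a) = a) (hne : ∀ a ∈ s, f a ≠ a) :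
    Even s.card := by
  induction s using Finset.strongInduction with
  | _ s ih =>
    rcases s.eq_empty_or_nonempty with rfl | ⟨a, ha⟩
    · simp
    · have hfa : f a ∈ s := hmem a ha
      have hfa' : f a ≠ a := hne a ha
      have htsub : (s.erase a).erase (f a) ⊂ s := by
        apply Finset.ssubset_of_subset_of_ssubset (Finset.erase_subset _ _)
        exact Finset.erase_ssubset ha
      set t := (s.erase a).erase (f a) with ht
      have hts : ∀ b ∈ t, b ∈ s := fun b hb => htsub.1 hb
      have key : ∀ b ∈ t, f b ∈ t := by
        intro b hb
        have hbs : b ∈ s := hts b hb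
        have hb1 : b ≠ f a := Finset.ne_of_mem_erase hb
        have hb2 : b ≠ a := Finset.ne_of_mem_erase (Finset.mem_of_mem_erase hb)
        refine Finset.mem_erase.2 ⟨?_, Finset.mem_erase.2 ⟨?_, hmem b hbs⟩⟩
        · intro h; exact hb2 (by rw [← hinv b hbs, h, hinv a ha])
        · intro h; exact hb1 (by rw [← hinv b hbs, h])
      have hcard : s.card = t.card + 2 := by
        have e1 : (s.erase a).card = s.card - 1 := Finset.card_erase_of_mem ha
        have e2 : t.card = (s.erase a).card - 1 :=
          Finset.card_erase_of_mem (Finset.mem_erase.2 ⟨hfa', hfa⟩)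
        have h2 : 2 ≤ s.card := Finset.one_lt_card.2 ⟨a, ha, f a, hfa, fun h => hfa' h.symm⟩
        omega
      obtain ⟨k, hk⟩ := ih t htsub key (fun b hb => hinv b (hts b hb)) (fun b hb => hne b (hts b hb))
      exact ⟨k + 1, by omega⟩

/-- A fixed-point-free involution on a type makes `Nat.card` even. -/
lemma even_natCard_of_invol {α : Type*} (f : α → α)
    (hinv : ∀ a, f (f a) = a) (hne : ∀ a, f a ≠ a) : Even (Nat.card α) := by
  by_cases h : Finite α
  · classical
    have := Fintype.ofFinite α
    rw [Nat.card_eq_fintype_card, ← Finset.card_univ]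
    exact even_card_of_invol _ f (fun a _ => Finset.mem_univ _)
      (fun a _ => hinv a) (fun a _ => hne a)
  · haveI : Infinite α := not_finite_iff_infinite.mp h
    rw [Nat.card_eq_zero_of_infinite]
    exact Even.zero

lemma hookLen_transpose (mu : YoungDiagram) (r c : ℕ) :
    hookLen mu.transpose r c = hookLen mu c r := by
  simp only [hookLen, YoungDiagram.rowLen_transpose, YoungDiagram.colLen_transpose]
  omega

lemma evenHooks_transpose (mu : YoungDiagram) : evenHooks mu.transpose = evenHooks mu := by
  unfold evenHooks
  apply Finset.card_bij (fun x _ => Prod.swap x)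
  · intro x hx
    simp only [Finset.mem_filter, YoungDiagram.mem_cells, YoungDiagram.mem_transpose] at hx ⊢
    refine ⟨hx.1, ?_⟩
    have := hookLen_transpose mu x.1 x.2
    rw [this] at hx
    exact hx.2
  · intro x hx y hy h
    exact Prod.swap_injective h
  · intro y hy
    simp only [Finset.mem_filter, YoungDiagram.mem_cells, YoungDiagram.mem_transpose] at hy ⊢
    exact ⟨y.swap, ⟨by simpa using hy.1, by rw [hookLen_transpose]; simpa using hy.2⟩, by simp⟩

lemma even_evenHooks_of_selfConj (mu : YoungDiagram) (h : mu.transpose = mu) :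
    Even (evenHooks mu) := by
  unfold evenHooks
  apply even_card_of_invol _ Prod.swap
  · intro x hx
    simp only [Finset.mem_filter, YoungDiagram.mem_cells] at hx ⊢
    constructor
    · rw [← h, YoungDiagram.mem_transpose]; simpa using hx.1
    · have := hookLen_transpose mu x.1 x.2
      rw [h] at this
      rw [Prod.fst_swap, Prod.snd_swap, ← this]
      exact hx.2
  · intro a _; simp
  · rintro ⟨r, c⟩ ha heq
    have hfst : r = c := (congrArg Prod.fst heq).symm
    subst hfst
    simp only [Finset.mem_filter, YoungDiagram.mem_cells] at ha
    have hmem : (r, r) ∈ mu := ha.1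
    have hlt : r < mu.rowLen r := YoungDiagram.mem_iff_lt_rowLen.1 hmem
    have hcol : mu.colLen r = mu.rowLen r := by
      rw [← YoungDiagram.rowLen_transpose, h]
    have hodd : ¬ Even (hookLen mu r r) := by
      unfold hookLen
      rw [hcol, Nat.even_iff]
      omega
    exact hodd ha.2

lemma card_transpose_s18 (mu : YoungDiagram) : mu.transpose.card = mu.card := by
  unfold YoungDiagram.card
  apply Finset.card_bij (fun x _ => Prod.swap x)
  · intro x hx
    simpa [YoungDiagram.mem_cells] using (YoungDiagram.mem_transpose.1 (by simpa using hx))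
  · intro x hx y hy hxy; exact Prod.swap_injective hxy
  · intro y hy
    exact ⟨y.swap, by simp [YoungDiagram.mem_transpose, YoungDiagram.mem_cells] at hy ⊢; exact hy, by simp⟩

theorem stmt18 (n : ℕ) :
    Even (Nat.card {μ : YoungDiagram // μ.card = n ∧ Odd (evenHooks μ)}) := by
  apply even_natCard_of_invol
    (fun x => ⟨x.1.transpose, by rw [card_transpose_s18]; exact x.2.1,
      by rw [evenHooks_transpose]; exact x.2.2⟩)
  · intro a
    apply Subtype.ext
    exact YoungDiagram.transpose_transpose a.1
  · intro a heq
    have h : a.1.transpose = a.1 := congrArg Subtype.val heq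
    exact (Nat.not_even_iff_odd.2 a.2.2) (even_evenHooks_of_selfConj a.1 h)
end
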